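/- arXiv:2603.20845 — 4 statements merged into one kernel-verified Lean document; each statement's English description precedes it below -/
import Mathlib

section
/- For every first-order information model M, world w, assignment g, and classical formula α: M,w ⊨_g α if and only if 𝓜_w ⊨_g α, where 𝓜_w is the quotient relational structure (D/∼_w, I_w^∼) induced at w and the right-hand side is standard Tarskian satisfaction (with g composed with the quotient map). -/
namespace InqBQ

/-- A signature: predicate symbols and function symbols, each with an arity. -/
structure Sig where
  Pred : Type
  parity : Pred → ℕ
  Func : Type
  farity : Func → ℕ

/-- Terms over a signature, with variables indexed by `ℕ`. -/
inductive Term (σ : Sig) : Type where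
  | var : ℕ → Term σ
  | func : (f : σ.Func) → (Fin (σ.farity f) → Term σ) → Term σ

/-- Formulas of InqBQ. -/
inductive Formula (σ : Sig) : Type where
  | pred : (P : σ.Pred) → (Fin (σ.parity P) → Term σ) → Formula σ
  | eq : Term σ → Term σ → Formula σ
  | falsum : Formula σ
  | conj : Formula σ → Formula σ → Formula σ
  | idisj : Formula σ → Formula σ → Formula σ
  | impl : Formula σ → Formula σ → Formula σ
  | all : ℕ → Formula σ → Formula σ
  | iex : ℕ → Formula σ → Formula σ

variable {σ : Sig}

/-- ¬φ := φ → ⊥ -/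
def Formula.neg (φ : Formula σ) : Formula σ := .impl φ .falsum

/-- ?φ := φ ⩒ ¬φ -/
def Formula.qm (φ : Formula σ) : Formula σ := .idisj φ φ.neg

/-- ⊤ := ¬⊥ -/
def Formula.verum : Formula σ := Formula.neg .falsum

/-- Classical formulas: no inquisitive disjunction, no inquisitive existential. -/
def Formula.IsClassical : Formula σ → Prop
  | .pred _ _ => True
  | .eq _ _ => True
  | .falsum => True
  | .conj φ ψ => φ.IsClassical ∧ ψ.IsClassical
  | .idisj _ _ => False
  | .impl φ ψ => φ.IsClassical ∧ ψ.IsClassical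
  | .all _ φ => φ.IsClassical
  | .iex _ _ => False

/-- The variable `n` occurs in a term. -/
def Term.VarOccurs : Term σ → ℕ → Prop
  | .var m, n => m = n
  | .func _ ts, n => ∃ i, (ts i).VarOccurs n

/-- The variable `n` occurs free in a formula. -/
def Formula.FreeVar : Formula σ → ℕ → Prop
  | .pred _ ts, n => ∃ i, (ts i).VarOccurs n
  | .eq t t', n => t.VarOccurs n ∨ t'.VarOccurs n
  | .falsum, _ => False
  | .conj φ ψ, n => φ.FreeVar n ∨ ψ.FreeVar n
  | .idisj φ ψ, n => φ.FreeVar n ∨ ψ.FreeVar n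
  | .impl φ ψ, n => φ.FreeVar n ∨ ψ.FreeVar n
  | .all x φ, n => n ≠ x ∧ φ.FreeVar n
  | .iex x φ, n => n ≠ x ∧ φ.FreeVar n

/-- A sentence is a formula with no free variables. -/
def Formula.IsSentence (φ : Formula σ) : Prop := ∀ n, ¬ φ.FreeVar n

/-- A first-order information model `M = (W, D, I, ∼)`. -/
structure Model (σ : Sig) where
  W : Type
  D : Type
  wNonempty : Nonempty W
  dNonempty : Nonempty D
  predI : W → (P : σ.Pred) → (Fin (σ.parity P) → D) → Prop
  funcI : W → (f : σ.Func) → (Fin (σ.farity f) → D) → D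
  eqI : W → D → D → Prop
  eqEquiv : ∀ w, Equivalence (eqI w)
  predCongr : ∀ w P (as bs : Fin (σ.parity P) → D),
      (∀ i, eqI w (as i) (bs i)) → (predI w P as ↔ predI w P bs)
  funcCongr : ∀ w f (as bs : Fin (σ.farity f) → D),
      (∀ i, eqI w (as i) (bs i)) → eqI w (funcI w f as) (funcI w f bs)

/-- Denotation `[t]^g_w` of a term at a world under an assignment. -/
def Term.val (M : Model σ) (w : M.W) (g : ℕ → M.D) : Term σ → M.D
  | .var n => g n
  | .func f ts => M.funcI w f (fun i => (ts i).val M w g)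

/-- The support relation `M, s ⊨_g φ`. -/
def Support (M : Model σ) : Set M.W → (ℕ → M.D) → Formula σ → Prop
  | s, g, .pred P ts => ∀ w ∈ s, M.predI w P (fun i => (ts i).val M w g)
  | s, g, .eq t t' => ∀ w ∈ s, M.eqI w (t.val M w g) (t'.val M w g)
  | s, _, .falsum => s = ∅
  | s, g, .conj φ ψ => Support M s g φ ∧ Support M s g ψ
  | s, g, .idisj φ ψ => Support M s g φ ∨ Support M s g ψ
  | s, g, .impl φ ψ => ∀ t : Set M.W, t ⊆ s → Support M t g φ → Support M t g ψ
  | s, g, .all x φ => ∀ d : M.D, Support M s (Function.update g x d) φ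
  | s, g, .iex x φ => ∃ d : M.D, Support M s (Function.update g x d) φ

/-- Id-models: `=` is interpreted as identity on the domain at each world. -/
def Model.IsId (M : Model σ) : Prop := ∀ w (d d' : M.D), M.eqI w d d' ↔ d = d'

/-- Entailment in InqBQ. -/
def Entails (Φ : Set (Formula σ)) (ψ : Formula σ) : Prop :=
  ∀ (M : Model σ) (s : Set M.W) (g : ℕ → M.D),
    (∀ φ ∈ Φ, Support M s g φ) → Support M s g ψ

/-- Entailment restricted to id-models. -/
def EntailsId (Φ : Set (Formula σ)) (ψ : Formula σ) : Prop :=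
  ∀ (M : Model σ), M.IsId → ∀ (s : Set M.W) (g : ℕ → M.D),
    (∀ φ ∈ Φ, Support M s g φ) → Support M s g ψ

/-- Validity in InqBQ. -/
def Valid (ψ : Formula σ) : Prop :=
  ∀ (M : Model σ) (s : Set M.W) (g : ℕ → M.D), Support M s g ψ

/-- Validity over id-models. -/
def IdValid (ψ : Formula σ) : Prop :=
  ∀ (M : Model σ), M.IsId → ∀ (s : Set M.W) (g : ℕ → M.D), Support M s g ψ

/-- Equivalence of formulas. -/
def FmEquiv (φ ψ : Formula σ) : Prop :=
  ∀ (M : Model σ) (s : Set M.W) (g : ℕ → M.D), Support M s g φ ↔ Support M s g ψ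

/-- A formula is truth-conditional if support at a state reduces to truth at each world. -/
def TruthConditional (φ : Formula σ) : Prop :=
  ∀ (M : Model σ) (s : Set M.W) (g : ℕ → M.D),
    Support M s g φ ↔ ∀ w ∈ s, Support M {w} g φ

/-- A standard (Tarskian) relational structure for the signature. -/
structure Struc (σ : Sig) where
  D : Type
  dNonempty : Nonempty D
  predI : (P : σ.Pred) → (Fin (σ.parity P) → D) → Prop
  funcI : (f : σ.Func) → (Fin (σ.farity f) → D) → D

/-- Tarskian term denotation. -/
def Term.tval (A : Struc σ) (g : ℕ → A.D) : Term σ → A.D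
  | .var n => g n
  | .func f ts => A.funcI f (fun i => (ts i).tval A g)

/-- Standard Tarskian satisfaction (reading `→` as material implication, `=` as identity). -/
def TSat (A : Struc σ) : (ℕ → A.D) → Formula σ → Prop
  | g, .pred P ts => A.predI P (fun i => (ts i).tval A g)
  | g, .eq t t' => t.tval A g = t'.tval A g
  | _, .falsum => False
  | g, .conj φ ψ => TSat A g φ ∧ TSat A g ψ
  | g, .idisj φ ψ => TSat A g φ ∨ TSat A g ψ
  | g, .impl φ ψ => TSat A g φ → TSat A g ψ
  | g, .all x φ => ∀ d : A.D, TSat A (Function.update g x d) φ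
  | g, .iex x φ => ∃ d : A.D, TSat A (Function.update g x d) φ

/-- Classical first-order (Tarskian) entailment. -/
def FOLEntails (Γ : Set (Formula σ)) (α : Formula σ) : Prop :=
  ∀ (A : Struc σ) (g : ℕ → A.D), (∀ γ ∈ Γ, TSat A g γ) → TSat A g α

/-- The setoid on the domain given by `∼_w`. -/
def Model.setoidAt (M : Model σ) (w : M.W) : Setoid M.D := ⟨M.eqI w, M.eqEquiv w⟩

/-- The quotient relational structure `𝓜_w = (D/∼_w, I_w^∼)` induced at world `w`. -/
noncomputable def Model.quotStruc (M : Model σ) (w : M.W) : Struc σ where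
  D := Quotient (M.setoidAt w)
  dNonempty := Nonempty.map (Quotient.mk (M.setoidAt w)) M.dNonempty
  predI P as := ∃ bs : Fin (σ.parity P) → M.D,
    (∀ i, Quotient.mk (M.setoidAt w) (bs i) = as i) ∧ M.predI w P bs
  funcI f as := Quotient.mk (M.setoidAt w) (M.funcI w f (fun i => (as i).out))

/-- λt := ∃̷x (x = t). -/
def lam (x : ℕ) (t : Term σ) : Formula σ := .iex x (.eq (.var x) t)

/-- Conjunction of a finite list of formulas. -/
def conjList (l : List (Formula σ)) : Formula σ := l.foldr .conj Formula.verum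

/-- x ≠ t. -/
def neTm (x : ℕ) (t : Term σ) : Formula σ := (Formula.eq (.var x) t).neg

/-- ∃̷x (x ≠ t). -/
def iexNe (t : Term σ) : Formula σ := .iex 0 (neTm 0 t)

/-- η := (=(a;b) ∧ =(b;a) ∧ ∃̷x(x≠b)) → ∃̷x(x≠a). -/
def etaOf (a b : Term σ) : Formula σ :=
  .impl (.conj (.impl (lam 0 a) (lam 0 b))
          (.conj (.impl (lam 0 b) (lam 0 a)) (iexNe b)))
    (iexNe a)

/-- θ := ∃̷x ∃̷y ¬(x = a ∧ y = b). -/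
def thetaOf (a b : Term σ) : Formula σ :=
  .iex 0 (.iex 1 (Formula.neg (.conj (.eq (.var 0) a) (.eq (.var 1) b))))

/-- ρ := ∀x∀y ?(x = y). -/
def rho : Formula σ := .all 0 (.all 1 (Formula.qm (.eq (.var 0) (.var 1))))

/-- The signature with exactly two constant symbols `a`, `b` (and no predicates). -/
def sigAB : Sig where
  Pred := Empty
  parity := fun P => P.elim
  Func := Bool
  farity := fun _ => 0

/-- The constant `a`. -/
def tA : Term sigAB := .func false Fin.elim0

/-- The constant `b`. -/
def tB : Term sigAB := .func true Fin.elim0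

def etaAB : Formula sigAB := etaOf tA tB

def thetaAB : Formula sigAB := thetaOf tA tB

/-- `a_w`. -/
def aVal (M : Model sigAB) (w : M.W) : M.D := M.funcI w false Fin.elim0

/-- `b_w`. -/
def bVal (M : Model sigAB) (w : M.W) : M.D := M.funcI w true Fin.elim0

/-- `R_s = {(a_w, b_w) | w ∈ s}`. -/
def RelOf (M : Model sigAB) (s : Set M.W) : Set (M.D × M.D) :=
  {p | ∃ w ∈ s, p = (aVal M w, bVal M w)}

/-- An id-model (for the signature with the two constants a, b) is full if `R_W = D × D`. -/
def Model.IsFull (M : Model sigAB) : Prop := RelOf M Set.univ = Set.univ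

/-- Classical existential quantifier ∃xφ := ¬∀x¬φ. -/
def cExists (x : ℕ) (φ : Formula σ) : Formula σ := (Formula.all x φ.neg).neg

/-- ⋀_{i<j<n} (xᵢ ≠ xⱼ). -/
def distinctFm (n : ℕ) : Formula sigAB :=
  conjList ((List.range n).flatMap fun i => (List.range n).filterMap fun j =>
    if i < j then some ((Formula.eq (.var i) (.var j)).neg) else none)

/-- χₙ := ∃x₁…∃xₙ ⋀_{i<j} (xᵢ ≠ xⱼ), expressing that there are at least n elements. -/
def chi (n : ℕ) : Formula sigAB := (List.range n).foldr cExists (distinctFm n)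

/-- The canonical full id-model over a nonempty domain `D`: worlds are pairs `(d, e)`,
with `a_{(d,e)} = d` and `b_{(d,e)} = e`. -/
def canonModel (D : Type) (hD : Nonempty D) : Model sigAB where
  W := D × D
  D := D
  wNonempty := Nonempty.map (fun d => (d, d)) hD
  dNonempty := hD
  predI := fun _ P => P.elim
  funcI := fun w f _ => cond f w.2 w.1
  eqI := fun _ => Eq
  eqEquiv := fun _ => eq_equivalence
  predCongr := fun _ P => P.elim
  funcCongr := fun _ _ _ _ _ => rfl

/-- Extending a signature with two fresh constant symbols `a`, `b`. -/
def sigExt (σ : Sig) : Sig where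
  Pred := σ.Pred
  parity := σ.parity
  Func := σ.Func ⊕ Bool
  farity := Sum.elim σ.farity (fun _ => 0)

/-- Lift of a term to the extended signature. -/
def Term.lift : Term σ → Term (sigExt σ)
  | .var n => .var n
  | .func f ts => .func (Sum.inl f) (fun i => (ts i).lift)

/-- Lift of a formula to the extended signature. -/
def Formula.lift : Formula σ → Formula (sigExt σ)
  | .pred P ts => .pred P (fun i => (ts i).lift)
  | .eq t t' => .eq t.lift t'.lift
  | .falsum => .falsum
  | .conj φ ψ => .conj φ.lift ψ.lift
  | .idisj φ ψ => .idisj φ.lift ψ.lift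
  | .impl φ ψ => .impl φ.lift ψ.lift
  | .all x φ => .all x φ.lift
  | .iex x φ => .iex x φ.lift

/-- The fresh constant `a` of the extended signature. -/
def extA : Term (sigExt σ) := .func (Sum.inr false) Fin.elim0

/-- The fresh constant `b` of the extended signature. -/
def extB : Term (sigExt σ) := .func (Sum.inr true) Fin.elim0

/-- The canonical full id-model based on a relational structure `𝓜`: worlds are pairs
`(d, e)`; `a_{(d,e)} = d`, `b_{(d,e)} = e`, and all symbols of `σ` are interpreted
rigidly as in `𝓜`. -/
def canonModelOf (A : Struc σ) : Model (sigExt σ) where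
  W := A.D × A.D
  D := A.D
  wNonempty := Nonempty.map (fun d => (d, d)) A.dNonempty
  dNonempty := A.dNonempty
  predI := fun _ P => A.predI P
  funcI := fun w f => match f with
    | .inl f₀ => fun as => A.funcI f₀ as
    | .inr b => fun _ => cond b w.2 w.1
  eqI := fun _ => Eq
  eqEquiv := fun _ => eq_equivalence
  predCongr := fun _ P as bs h => by
    have hab : as = bs := funext fun i => h i
    rw [hab]
  funcCongr := fun w f as bs h => by
    have hab : as = bs := funext fun i => h i
    rw [hab]

lemma support_empty (M : Model σ) (g : ℕ → M.D) (φ : Formula σ) : Support M ∅ g φ := by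
  induction φ generalizing g with
  | pred | eq => simp [Support]
  | falsum => rfl
  | conj φ ψ ihφ ihψ => exact ⟨ihφ g, ihψ g⟩
  | idisj φ ψ ihφ _ => exact Or.inl (ihφ g)
  | impl φ ψ _ ihψ =>
      rintro t ht -
      rw [Set.subset_empty_iff.mp ht]
      exact ihψ g
  | all x φ ih => exact fun d => ih _
  | iex x φ ih => exact ⟨Classical.choice M.dNonempty, ih _⟩

lemma support_singleton_pred_iff (M : Model σ) (w : M.W) (g : ℕ → M.D) (P : σ.Pred)
    (ts : Fin (σ.parity P) → Term σ) :
    Support M {w} g (.pred P ts) ↔ M.predI w P (fun i => (ts i).val M w g) := by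
  simp [Support]

lemma support_singleton_eq_iff (M : Model σ) (w : M.W) (g : ℕ → M.D) (t t' : Term σ) :
    Support M {w} g (.eq t t') ↔ M.eqI w (t.val M w g) (t'.val M w g) := by
  simp [Support]

/-- At a single world implication is material: the only other substate, `∅`, supports
everything. -/
lemma support_singleton_impl_iff (M : Model σ) (w : M.W) (g : ℕ → M.D) (φ ψ : Formula σ) :
    Support M {w} g (.impl φ ψ) ↔ (Support M {w} g φ → Support M {w} g ψ) := by
  refine ⟨fun h => h {w} subset_rfl, fun h t ht htφ => ?_⟩
  rcases Set.subset_singleton_iff_eq.mp ht with rfl | rfl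
  · exact support_empty M g ψ
  · exact h htφ

lemma quotStruc_predI_mk_iff (M : Model σ) (w : M.W) (P : σ.Pred)
    (as : Fin (σ.parity P) → M.D) :
    (M.quotStruc w).predI P (fun i => Quotient.mk (M.setoidAt w) (as i)) ↔ M.predI w P as :=
  ⟨fun ⟨bs, hbs, hP⟩ => (M.predCongr w P bs as fun i => Quotient.exact (hbs i)).mp hP,
    fun hP => ⟨as, fun _ => rfl, hP⟩⟩

lemma tval_quotStruc (M : Model σ) (w : M.W) (g : ℕ → M.D) (t : Term σ) :
    t.tval (M.quotStruc w) (fun n => Quotient.mk (M.setoidAt w) (g n)) =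
      Quotient.mk (M.setoidAt w) (t.val M w g) := by
  induction t with
  | var n => rfl
  | func f ts ih =>
      refine Quotient.sound (M.funcCongr w f _ _ fun i => Quotient.exact (s := M.setoidAt w) ?_)
      exact (Quotient.out_eq _).trans (ih i)

/-- For classical formulas, truth at a world coincides with Tarskian
satisfaction in the quotient structure 𝓜_w (the assignment being composed with the
quotient map). -/
theorem classical_truth_at_world_iff_tarski (σ : Sig) (M : Model σ) (w : M.W)
    (g : ℕ → M.D) (α : Formula σ) (hα : α.IsClassical) :
    Support M {w} g α ↔
      TSat (M.quotStruc w) (fun n => Quotient.mk (M.setoidAt w) (g n)) α := by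
  induction α generalizing g with
  | pred P ts =>
      simp only [support_singleton_pred_iff, TSat, tval_quotStruc, quotStruc_predI_mk_iff]
  | eq t t' =>
      simp only [support_singleton_eq_iff, TSat, tval_quotStruc]
      exact (Quotient.eq (r := M.setoidAt w)).symm
  | falsum => exact iff_of_false (Set.singleton_ne_empty w) id
  | conj φ ψ ihφ ihψ => exact and_congr (ihφ g hα.1) (ihψ g hα.2)
  | impl φ ψ ihφ ihψ =>
      rw [support_singleton_impl_iff]
      exact imp_congr (ihφ g hα.1) (ihψ g hα.2)
  | all x φ ih =>
      have update_mk : ∀ d, (fun n => Quotient.mk (M.setoidAt w) (Function.update g x d n)) =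
          Function.update (fun n => Quotient.mk _ (g n)) x (Quotient.mk _ d) :=
        fun d => Function.comp_update _ g x d
      simp only [Support, TSat, ih _ hα, update_mk]
      exact ⟨fun h q => Quotient.inductionOn q h, fun h d => h _⟩
  | idisj | iex => exact hα.elim

end InqBQ
end

section
/- Semantics of dependence formulas in id-models: for all terms t₁,…,tₙ,t', every id-model M, state s, and assignment g: M,s ⊨_g =(t₁,…,tₙ; t') if and only if for all w,w' ∈ s, if [tᵢ]^g_w = [tᵢ]^g_{w'} for every i ≤ n then [t']^g_w = [t']^g_{w'}. -/
namespace InqBQ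

variable {σ : Sig}

/-!
In an id-model `λt` is supported at a state exactly when `t` takes a single value there. So
`=(t₁,…,tₙ; t')` holds at `s` iff every substate of `s` on which all `tᵢ` are constant also has
`t'` constant, and it suffices to test this on the two-world substates `{w, w'}`.
-/

theorem Term.val_update_of_not_varOccurs (M : Model σ) (w : M.W) (g : ℕ → M.D) (x : ℕ)
    (d : M.D) :
    ∀ t : Term σ, ¬ t.VarOccurs x → t.val M w (Function.update g x d) = t.val M w g
  | .var _, h => Function.update_of_ne h _ _
  | .func f ts, h => congrArg (M.funcI w f) <| funext fun i =>
      val_update_of_not_varOccurs M w g x d (ts i) fun hi => h ⟨i, hi⟩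

theorem support_conjList_iff (M : Model σ) (u : Set M.W) (g : ℕ → M.D) :
    ∀ l : List (Formula σ), Support M u g (conjList l) ↔ ∀ φ ∈ l, Support M u g φ
  | [] => iff_of_true (fun _ _ ht => ht) (by simp)
  | φ :: l => by
    simp only [List.forall_mem_cons, ← support_conjList_iff M u g l]
    rfl

theorem exists_forall_eq_iff_subsingleton_image {α β : Type*} [Nonempty β] (f : α → β)
    (u : Set α) : (∃ b, ∀ a ∈ u, f a = b) ↔ (f '' u).Subsingleton := by
  refine ⟨fun ⟨b, hb⟩ => Set.subsingleton_of_subset_singleton (a := b) ?_, fun h => ?_⟩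
  · rintro _ ⟨a, ha, rfl⟩
    exact hb a ha
  · obtain h | ⟨b, hb⟩ := Set.subsingleton_iff_eq_empty_or_singleton.mp h
    · refine ⟨Classical.arbitrary β, fun a ha => absurd ha ?_⟩
      exact Set.image_eq_empty.mp h ▸ Set.notMem_empty a
    · exact ⟨b, fun a ha => Set.mem_singleton_iff.mp (hb ▸ Set.mem_image_of_mem f ha)⟩

theorem support_lam_iff (M : Model σ) (hid : M.IsId) (u : Set M.W) (g : ℕ → M.D)
    {x : ℕ} {t : Term σ} (hx : ¬ t.VarOccurs x) :
    Support M u g (lam x t) ↔ ((fun w => t.val M w g) '' u).Subsingleton := by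
  have := M.dNonempty
  rw [← exists_forall_eq_iff_subsingleton_image]
  simp only [lam, Support, Term.val, Function.update_self,
    t.val_update_of_not_varOccurs M _ g x _ hx, show ∀ w d d', M.eqI w d d' ↔ d = d' from hid,
    eq_comm]

theorem forall_subset_subsingleton_image_iff {ι W α β : Type*} (fs : ι → W → α) (f : W → β)
    (s : Set W) :
    (∀ u ⊆ s, (∀ i, (fs i '' u).Subsingleton) → (f '' u).Subsingleton) ↔
      ∀ w ∈ s, ∀ w' ∈ s, (∀ i, fs i w = fs i w') → f w = f w' := by
  refine ⟨fun H w hw w' hw' hfs => ?_, fun H u hu hfs => ?_⟩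
  · refine H {w, w'} (Set.pair_subset hw hw') (fun i => ?_) (by simp) (by simp)
    simp [Set.image_pair, hfs i]
  · rintro _ ⟨a, ha, rfl⟩ _ ⟨b, hb, rfl⟩
    exact H a (hu ha) b (hu hb) fun i => hfs i ⟨a, ha, rfl⟩ ⟨b, hb, rfl⟩

/-- Semantics of dependence formulas in id-models:
`=(t₁,…,tₙ; t') := (λt₁ ∧ … ∧ λtₙ) → λt'` is supported at `s` iff throughout `s` the
value of `t'` is functionally determined by the values of `t₁,…,tₙ`. -/
theorem dependence_formula_semantics (σ : Sig) (M : Model σ) (hid : M.IsId)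
    (n : ℕ) (ts : Fin n → Term σ) (t' : Term σ) (xs : Fin n → ℕ) (x' : ℕ)
    (hxs : ∀ i, ¬ (ts i).VarOccurs (xs i)) (hx' : ¬ t'.VarOccurs x')
    (s : Set M.W) (g : ℕ → M.D) :
    Support M s g (.impl (conjList (List.ofFn fun i => lam (xs i) (ts i))) (lam x' t'))
      ↔ ∀ w ∈ s, ∀ w' ∈ s,
          (∀ i, (ts i).val M w g = (ts i).val M w' g) → t'.val M w g = t'.val M w' g := by
  rw [← forall_subset_subsingleton_image_iff (fun i w => (ts i).val M w g)]
  simp only [Support, support_conjList_iff, List.forall_mem_ofFn_iff,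
    support_lam_iff M hid _ g (hxs _), support_lam_iff M hid _ g hx']

end InqBQ
end

section
/- In the signature with exactly two constant symbols a,b, for every id-model M with universe W and domain D and every state s ⊆ W: s supports the antecedent of η but not its consequent (that is, M,s ⊨ =(a;b) ∧ =(b;a) ∧ ∃̷x(x≠b) and M,s ⊭ ∃̷x(x≠a)) if and only if R_s is the graph of an injective function from D to D that is not surjective. -/
namespace InqBQ

variable {σ : Sig}

lemma funcI_eq_elim0 (M : Model sigAB) (w : M.W) (c : Bool) (as : Fin 0 → M.D) :
    M.funcI w c as = M.funcI w c Fin.elim0 := by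
  congr 1; funext i; exact i.elim0

lemma val_const (M : Model sigAB) (c : Bool) (w : M.W) (g : ℕ → M.D) :
    Term.val M w g (.func c Fin.elim0) = M.funcI w c Fin.elim0 :=
  funcI_eq_elim0 M w c _

lemma support_eqvar_iff (M : Model sigAB) (hid : M.IsId) (c : Bool) (u : Set M.W)
    (g : ℕ → M.D) :
    Support M u g (Formula.eq (.var 0) (.func c Fin.elim0)) ↔
      ∀ w ∈ u, M.funcI w c Fin.elim0 = g 0 := by
  show (∀ w ∈ u, M.eqI w _ _) ↔ _
  refine forall₂_congr fun w hw => ?_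
  rw [hid, show Term.val M w g (Term.var 0) = g 0 from rfl, val_const]
  exact eq_comm

lemma support_lam_iff_s10 (M : Model sigAB) (hid : M.IsId) (c : Bool) (s : Set M.W)
    (g : ℕ → M.D) :
    Support M s g (lam 0 (.func c Fin.elim0)) ↔ ∃ d, ∀ w ∈ s, M.funcI w c Fin.elim0 = d := by
  show (∃ d, Support M s (Function.update g 0 d) _) ↔ _
  refine exists_congr fun d => ?_
  rw [support_eqvar_iff M hid c s (Function.update g 0 d), Function.update_self]

lemma support_iexNe_iff (M : Model sigAB) (hid : M.IsId) (c : Bool) (s : Set M.W)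
    (g : ℕ → M.D) :
    Support M s g (iexNe (.func c Fin.elim0)) ↔ ∃ d, ∀ w ∈ s, M.funcI w c Fin.elim0 ≠ d := by
  show (∃ d, ∀ t ⊆ s, Support M t (Function.update g 0 d) _ → t = ∅) ↔ _
  refine exists_congr fun d => ?_
  constructor
  · intro h w hw hc
    have := h {w} (by simpa using hw)
      ((support_eqvar_iff M hid c {w} _).mpr (by simp [hc]))
    simp at this
  · intro h t ht hsup
    rw [Set.eq_empty_iff_forall_notMem]
    intro w hw
    have := (support_eqvar_iff M hid c t _).mp hsup w hw
    rw [Function.update_self] at this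
    exact h w (ht hw) this

/-- A state supports the antecedent of η but not its consequent iff `R_s`
is the graph of an injective function from D to D which is not surjective. -/
theorem eta_falsifying_state_characterization (M : Model sigAB) (hid : M.IsId)
    (s : Set M.W) (g : ℕ → M.D) :
    (Support M s g (.conj (.impl (lam 0 tA) (lam 0 tB))
        (.conj (.impl (lam 0 tB) (lam 0 tA)) (iexNe tB))) ∧
      ¬ Support M s g (iexNe tA))
    ↔ ((∀ d : M.D, ∃! e : M.D, (d, e) ∈ RelOf M s) ∧
        (∀ d d' e : M.D, (d, e) ∈ RelOf M s → (d', e) ∈ RelOf M s → d = d') ∧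
        ¬ (∀ e : M.D, ∃ d : M.D, (d, e) ∈ RelOf M s)) := by
  have hlamA : ∀ (t : Set M.W), Support M t g (lam 0 tA) ↔ ∃ d, ∀ w ∈ t, aVal M w = d :=
    fun t => support_lam_iff_s10 M hid false t g
  have hlamB : ∀ (t : Set M.W), Support M t g (lam 0 tB) ↔ ∃ d, ∀ w ∈ t, bVal M w = d :=
    fun t => support_lam_iff_s10 M hid true t g
  have hNeA : Support M s g (iexNe tA) ↔ ∃ d, ∀ w ∈ s, aVal M w ≠ d :=
    support_iexNe_iff M hid false s g
  have hNeB : Support M s g (iexNe tB) ↔ ∃ d, ∀ w ∈ s, bVal M w ≠ d :=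
    support_iexNe_iff M hid true s g
  have hmem : ∀ (d e : M.D), (d, e) ∈ RelOf M s ↔ ∃ w ∈ s, aVal M w = d ∧ bVal M w = e := by
    intro d e
    constructor
    · rintro ⟨w, hw, h⟩
      exact ⟨w, hw, (congrArg Prod.fst h).symm, (congrArg Prod.snd h).symm⟩
    · rintro ⟨w, hw, h1, h2⟩
      exact ⟨w, hw, by rw [h1, h2]⟩
  constructor
  · rintro ⟨⟨H1, H2, H3⟩, H4⟩
    have hsurj : ∀ d, ∃ w ∈ s, aVal M w = d := by
      intro d
      by_contra hc
      push_neg at hc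
      exact H4 (hNeA.mpr ⟨d, hc⟩)
    have hfun : ∀ w w', w ∈ s → w' ∈ s → aVal M w = aVal M w' → bVal M w = bVal M w' := by
      intro w w' hw hw' hab
      have hsup : Support M {w, w'} g (lam 0 tA) :=
        (hlamA _).mpr ⟨aVal M w', by rintro u (rfl | rfl) <;> simp [hab]⟩
      obtain ⟨e, he⟩ := (hlamB _).mp (H1 {w, w'} (by rintro u (rfl | rfl) <;> assumption) hsup)
      rw [he w (by simp), he w' (by simp)]
    have hinj : ∀ w w', w ∈ s → w' ∈ s → bVal M w = bVal M w' → aVal M w = aVal M w' := by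
      intro w w' hw hw' hab
      have hsup : Support M {w, w'} g (lam 0 tB) :=
        (hlamB _).mpr ⟨bVal M w', by rintro u (rfl | rfl) <;> simp [hab]⟩
      obtain ⟨e, he⟩ := (hlamA _).mp (H2 {w, w'} (by rintro u (rfl | rfl) <;> assumption) hsup)
      rw [he w (by simp), he w' (by simp)]
    refine ⟨?_, ?_, ?_⟩
    · intro d
      obtain ⟨w, hw, hwd⟩ := hsurj d
      refine ⟨bVal M w, (hmem _ _).mpr ⟨w, hw, hwd, rfl⟩, ?_⟩
      intro e he
      obtain ⟨w', hw', h1, h2⟩ := (hmem _ _).mp he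
      rw [← h2]
      exact (hfun w' w hw' hw (h1.trans hwd.symm)).symm ▸ rfl
    · intro d d' e hde hd'e
      obtain ⟨w, hw, h1, h2⟩ := (hmem _ _).mp hde
      obtain ⟨w', hw', h1', h2'⟩ := (hmem _ _).mp hd'e
      rw [← h1, ← h1']
      exact hinj w w' hw hw' (h2.trans h2'.symm)
    · obtain ⟨e, he⟩ := hNeB.mp H3
      intro hc
      obtain ⟨d, hd⟩ := hc e
      obtain ⟨w, hw, _, h2⟩ := (hmem _ _).mp hd
      exact he w hw h2
  · rintro ⟨htot, hinj, hnsurj⟩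
    obtain ⟨d₀⟩ := M.dNonempty
    refine ⟨⟨?_, ?_, ?_⟩, ?_⟩
    · intro t ht hsup
      obtain ⟨d, hd⟩ := (hlamA _).mp hsup
      obtain ⟨e, he, heu⟩ := htot d
      refine (hlamB _).mpr ⟨e, fun w hw => ?_⟩
      exact heu (bVal M w) ((hmem _ _).mpr ⟨w, ht hw, hd w hw, rfl⟩)
    · intro t ht hsup
      obtain ⟨e, he⟩ := (hlamB _).mp hsup
      rcases t.eq_empty_or_nonempty with rfl | ⟨w₀, hw₀⟩
      · exact (hlamA _).mpr ⟨d₀, by simp⟩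
      refine (hlamA _).mpr ⟨aVal M w₀, fun w hw => ?_⟩
      exact hinj _ _ e ((hmem _ _).mpr ⟨w, ht hw, rfl, he w hw⟩)
        ((hmem _ _).mpr ⟨w₀, ht hw₀, rfl, he w₀ hw₀⟩)
    · push_neg at hnsurj
      obtain ⟨e, he⟩ := hnsurj
      refine hNeB.mpr ⟨e, fun w hw hc => ?_⟩
      exact he (aVal M w) ((hmem _ _).mpr ⟨w, hw, rfl, hc⟩)
    · intro hc
      obtain ⟨d, hd⟩ := hNeA.mp hc
      obtain ⟨e, he, _⟩ := htot d
      obtain ⟨w, hw, h1, _⟩ := (hmem _ _).mp he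
      exact hd w hw h1

end InqBQ
end

section
/- Definability of non-fullness: in the signature with exactly two constant symbols a,b, for every id-model M: M is full if and only if M ⊭ θ, where θ := ∃̷x∃̷y ¬(x=a ∧ y=b). -/
namespace InqBQ

variable {σ : Sig}

lemma tA_val (M : Model sigAB) (w : M.W) (g : ℕ → M.D) :
    Term.val M w g tA = aVal M w := by
  show M.funcI w false _ = M.funcI w false Fin.elim0
  congr 1; funext i; exact i.elim0

lemma tB_val (M : Model sigAB) (w : M.W) (g : ℕ → M.D) :
    Term.val M w g tB = bVal M w := by
  show M.funcI w true _ = M.funcI w true Fin.elim0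
  congr 1; funext i; exact i.elim0

lemma theta_support_iff (M : Model sigAB) (hid : M.IsId) (g : ℕ → M.D) :
    Support M Set.univ g thetaAB ↔
      ∃ d e : M.D, ∀ w : M.W, ¬ (aVal M w = d ∧ bVal M w = e) := by
  constructor
  · rintro ⟨d, e, h⟩
    refine ⟨d, e, fun w ⟨ha, hb⟩ => ?_⟩
    have := h {w} (by simp) ?_
    · simp only [Support] at this
      simp at this
    · constructor
      · intro w' hw'
        have : w' = w := by simpa using hw'
        subst this
        rw [tA_val, hid]
        simp [Term.val, Function.update, ha]
      · intro w' hw'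
        have : w' = w := by simpa using hw'
        subst this
        rw [tB_val, hid]
        simp [Term.val, Function.update, hb]
  · rintro ⟨d, e, h⟩
    refine ⟨d, e, fun t _ ht => ?_⟩
    obtain ⟨h1, h2⟩ := ht
    ext w
    simp only [Set.mem_empty_iff_false, iff_false]
    intro hw
    have ha := h1 w hw
    have hb := h2 w hw
    rw [tA_val, hid] at ha
    rw [tB_val, hid] at hb
    simp [Term.val, Function.update] at ha hb
    exact h w ⟨ha.symm, hb.symm⟩

/-- Definability of non-fullness: an id-model (for the signature with
exactly two constants a, b) is full iff it does not support θ := ∃̷x∃̷y ¬(x=a ∧ y=b). -/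
theorem full_iff_not_theta (M : Model sigAB) (hid : M.IsId) :
    M.IsFull ↔ ∀ g : ℕ → M.D, ¬ Support M Set.univ g thetaAB := by
  constructor
  · intro hfull g hsup
    obtain ⟨d, e, h⟩ := (theta_support_iff M hid g).mp hsup
    have : (d, e) ∈ RelOf M Set.univ := hfull ▸ Set.mem_univ _
    obtain ⟨w, -, hw⟩ := this
    exact h w ⟨(Prod.mk.injEq _ _ _ _ ▸ hw).1.symm, (Prod.mk.injEq _ _ _ _ ▸ hw).2.symm⟩
  · intro h
    ext ⟨d, e⟩
    simp only [Set.mem_univ, iff_true]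
    by_contra hne
    obtain ⟨d₀⟩ := M.dNonempty
    refine h (fun _ => d₀) ((theta_support_iff M hid _).mpr ⟨d, e, fun w ⟨ha, hb⟩ => ?_⟩)
    exact hne ⟨w, Set.mem_univ w, by rw [ha, hb]⟩

end InqBQ
end
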